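/- arXiv:1508.00056 — 2 statements merged into one kernel-verified Lean document; each statement's English description precedes it below -/
import Mathlib

section
/- For natural numbers m ≥ 1 and k ≥ 1, the limit as ε → 0 (ε real, ε ≠ 0) of Γ(-(k+1)m - (k+1)ε) / Γ(-km - kε) equals (k/(k+1)) · (-1)^m · (km)! / ((k+1)m)!. -/
open Real Filter Topology

private lemma sin_pi_mul_ne_zero' {x : ℝ} (hx0 : x ≠ 0) (hx1 : |x| < 1) :
    Real.sin (π * x) ≠ 0 := by
  intro h
  rcases Real.sin_eq_zero_iff.mp h with ⟨z, hz⟩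
  have hzx : (z : ℝ) = x := by
    have hπ : (π : ℝ) ≠ 0 := Real.pi_ne_zero
    have h' : (z:ℝ) * π = x * π := by linear_combination hz
    exact mul_right_cancel₀ hπ h' 
  have hz0 : z ≠ 0 := by
    intro h0; rw [h0] at hzx; exact hx0 (by simpa using hzx.symm)
  have : (1 : ℝ) ≤ |(z : ℝ)| := by
    have := Int.one_le_abs hz0
    exact_mod_cast this
  rw [hzx] at this
  linarith

private lemma gamma_neg_eq (j : ℕ) {x : ℝ} (hx0 : x ≠ 0) (hx1 : |x| < 1) :
    Real.Gamma (-(j : ℝ) - x) =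
      π / (((-1 : ℝ)) ^ (j + 1) * Real.sin (π * x) * Real.Gamma (1 + j + x)) := by
  have hsin : Real.sin (π * (-(j : ℝ) - x)) = (-1 : ℝ) ^ (j + 1) * Real.sin (π * x) := by
    have h1 : π * (-(j : ℝ) - x) = -((j : ℝ) * π - -(π * x)) := by ring
    rw [h1, Real.sin_neg, Real.sin_nat_mul_pi_sub, Real.sin_neg]
    ring
  have hsin' : Real.sin (π * (-(j : ℝ) - x)) ≠ 0 := by
    rw [hsin]
    exact mul_ne_zero (by positivity) (sin_pi_mul_ne_zero' hx0 hx1)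
  have hGpos : 0 < Real.Gamma (1 + j + x) := by
    apply Real.Gamma_pos_of_pos
    have : -1 < x := by cases abs_lt.mp hx1; linarith
    have : (0:ℝ) ≤ j := Nat.cast_nonneg j
    linarith
  have key := Real.Gamma_mul_Gamma_one_sub (-(j : ℝ) - x)
  have h1s : 1 - (-(j : ℝ) - x) = 1 + j + x := by ring
  rw [h1s] at key
  rw [← hsin]
  field_simp at key ⊢
  linarith [key]

theorem limit_gamma_quotient (m k : ℕ) (hm : 1 ≤ m) (hk : 1 ≤ k) :
    Filter.Tendsto
      (fun ε : ℝ => Real.Gamma (-(((k + 1) * m : ℕ) : ℝ) - (k + 1) * ε) /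
        Real.Gamma (-((k * m : ℕ) : ℝ) - k * ε))
      (nhdsWithin 0 {ε : ℝ | ε ≠ 0})
      (nhds ((k / (k + 1) : ℝ) * (-1) ^ m * ((k * m).factorial : ℝ) /
        (((k + 1) * m).factorial : ℝ))) := by
  have hπ : (0:ℝ) < π := Real.pi_pos
  have hk0 : (0:ℝ) < k := by exact_mod_cast hk
  have hk1 : (0:ℝ) < (k:ℝ) + 1 := by positivity
  set n : ℕ := k * m with hn
  set N : ℕ := (k + 1) * m with hN
  have hNn : N = n + m := by simp [hn, hN]; ring
  -- the auxiliary function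
  set F : ℝ → ℝ := fun ε =>
    (-1 : ℝ) ^ m * (Real.sin (π * ((k:ℝ) * ε)) / Real.sin (π * (((k:ℝ) + 1) * ε))) *
      (Real.Gamma (1 + n + (k:ℝ) * ε) / Real.Gamma (1 + N + ((k:ℝ) + 1) * ε)) with hF
  -- limits of sin slopes
  have hslope : ∀ c : ℝ, Tendsto (fun ε : ℝ => Real.sin (π * (c * ε)) / ε)
      (𝓝[≠] (0:ℝ)) (𝓝 (π * c)) := by
    intro c
    have hd : HasDerivAt (fun ε : ℝ => Real.sin (π * (c * ε))) (π * c) 0 := by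
      have h1 : HasDerivAt (fun ε : ℝ => π * (c * ε)) (π * c) 0 := by
        simpa [mul_assoc] using (hasDerivAt_id (0:ℝ)).const_mul (π * c)
      simpa using h1.sin
    have h2 := hasDerivAt_iff_tendsto_slope.mp hd
    refine h2.congr (fun ε => ?_)
    simp [slope_fun_def, div_eq_inv_mul]
  -- sin ratio limit
  have hsinratio : Tendsto (fun ε : ℝ =>
      Real.sin (π * ((k:ℝ) * ε)) / Real.sin (π * (((k:ℝ) + 1) * ε)))
      (𝓝[≠] (0:ℝ)) (𝓝 ((k : ℝ) / ((k:ℝ) + 1))) := by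
    have h := (hslope (k:ℝ)).div (hslope ((k:ℝ) + 1)) (by positivity)
    have heq : ∀ᶠ ε in 𝓝[≠] (0:ℝ),
        (Real.sin (π * ((k:ℝ) * ε)) / ε) / (Real.sin (π * (((k:ℝ) + 1) * ε)) / ε) =
        Real.sin (π * ((k:ℝ) * ε)) / Real.sin (π * (((k:ℝ) + 1) * ε)) := by
      filter_upwards [self_mem_nhdsWithin] with ε hε
      rw [div_div_div_comm, div_self hε, div_one]
    have hval : π * (k:ℝ) / (π * ((k:ℝ) + 1)) = (k:ℝ) / ((k:ℝ) + 1) := by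
      rw [mul_div_mul_left _ _ (ne_of_gt hπ)]
    rw [← hval]
    exact h.congr' heq
  -- Gamma limits
  have hGamma : ∀ (j : ℕ) (c : ℝ), Tendsto (fun ε : ℝ => Real.Gamma (1 + j + c * ε))
      (𝓝[≠] (0:ℝ)) (𝓝 ((j.factorial : ℝ))) := by
    intro j c
    have hc0 : ContinuousAt Real.Gamma (1 + (j:ℝ) + c * 0) := by
      apply (Real.differentiableAt_Gamma _).continuousAt
      intro i h
      have h0 : (0:ℝ) ≤ (i:ℝ) := Nat.cast_nonneg i
      have hj : (0:ℝ) ≤ (j:ℝ) := Nat.cast_nonneg j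
      rw [mul_zero, add_zero] at h
      linarith
    have hc2 : ContinuousAt (fun ε : ℝ => 1 + (j:ℝ) + c * ε) 0 := by fun_prop
    have ht : Tendsto (fun ε : ℝ => Real.Gamma (1 + (j:ℝ) + c * ε)) (𝓝 0)
        (𝓝 (Real.Gamma (1 + (j:ℝ) + c * 0))) :=
      ContinuousAt.comp (g := Real.Gamma) (f := fun ε : ℝ => 1 + (j:ℝ) + c * ε) hc0 hc2
    have h2 : Real.Gamma (1 + (j:ℝ) + c * 0) = j.factorial := by
      rw [mul_zero, add_zero, add_comm 1 (j:ℝ), Real.Gamma_nat_eq_factorial]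
    rw [← h2]
    exact ht.mono_left nhdsWithin_le_nhds
  -- limit of F
  have hFlim : Tendsto F (𝓝[≠] (0:ℝ))
      (𝓝 ((k / (k + 1) : ℝ) * (-1) ^ m * ((n.factorial : ℝ)) / ((N.factorial : ℝ)))) := by
    have hconst : Tendsto (fun _ : ℝ => ((-1:ℝ))^m) (𝓝[≠] (0:ℝ)) (𝓝 (((-1:ℝ))^m)) :=
      tendsto_const_nhds
    have h := ((hconst.mul hsinratio).mul
      ((hGamma n (k:ℝ)).div (hGamma N ((k:ℝ)+1)) (by positivity))) -- const = (-1)^m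
    have : (-1 : ℝ) ^ m * ((k : ℝ) / ((k:ℝ) + 1)) * ((n.factorial : ℝ) / (N.factorial : ℝ))
        = (k / (k + 1) : ℝ) * (-1) ^ m * ((n.factorial : ℝ)) / ((N.factorial : ℝ)) := by
      ring
    rw [← this]
    exact h
  -- eventual equality
  have heq : ∀ᶠ ε in 𝓝[≠] (0:ℝ),
      Real.Gamma (-(((k + 1) * m : ℕ) : ℝ) - ((k:ℝ) + 1) * ε) /
        Real.Gamma (-((k * m : ℕ) : ℝ) - (k:ℝ) * ε) = F ε := by
    have hsmall : ∀ᶠ ε in 𝓝[≠] (0:ℝ), |ε| < 1 / ((k:ℝ) + 1) := by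
      apply eventually_nhdsWithin_of_eventually_nhds
      have : Tendsto (fun ε : ℝ => |ε|) (𝓝 0) (𝓝 |(0:ℝ)|) := continuous_abs.continuousAt
      simp only [abs_zero] at this
      exact this.eventually_lt_const (by positivity)
    filter_upwards [hsmall, self_mem_nhdsWithin] with ε hεs hε0
    have hε0' : ε ≠ 0 := hε0
    have hx1 : (k:ℝ) * ε ≠ 0 := mul_ne_zero (ne_of_gt hk0) hε0'
    have hx1' : |(k:ℝ) * ε| < 1 := by
      rw [abs_mul, abs_of_pos hk0]
      calc (k:ℝ) * |ε| ≤ ((k:ℝ)+1) * |ε| := by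
            apply mul_le_mul_of_nonneg_right (by linarith) (abs_nonneg _)
        _ < ((k:ℝ)+1) * (1/((k:ℝ)+1)) := by
            apply mul_lt_mul_of_pos_left hεs hk1
        _ = 1 := by field_simp
    have hx2 : ((k:ℝ)+1) * ε ≠ 0 := mul_ne_zero (ne_of_gt hk1) hε0'
    have hx2' : |((k:ℝ)+1) * ε| < 1 := by
      rw [abs_mul, abs_of_pos hk1]
      calc ((k:ℝ)+1) * |ε| < ((k:ℝ)+1) * (1/((k:ℝ)+1)) := by
            apply mul_lt_mul_of_pos_left hεs hk1
        _ = 1 := by field_simp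
    have e1 := gamma_neg_eq N hx2 hx2'
    have e2 := gamma_neg_eq n hx1 hx1'
    rw [show (-(((k + 1) * m : ℕ) : ℝ) - ((k:ℝ) + 1) * ε) = -(N:ℝ) - ((k:ℝ)+1)*ε by rw [hN],
        show (-((k * m : ℕ) : ℝ) - (k:ℝ) * ε) = -(n:ℝ) - (k:ℝ)*ε by rw [hn],
        e1, e2, hF]
    have s1 : Real.sin (π * ((k:ℝ) * ε)) ≠ 0 := sin_pi_mul_ne_zero' hx1 hx1'
    have s2 : Real.sin (π * (((k:ℝ)+1) * ε)) ≠ 0 := sin_pi_mul_ne_zero' hx2 hx2'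
    have g1 : Real.Gamma (1 + (n:ℝ) + (k:ℝ) * ε) ≠ 0 := by
      apply ne_of_gt; apply Real.Gamma_pos_of_pos
      have := (abs_lt.mp hx1').1
      have : (0:ℝ) ≤ (n:ℝ) := Nat.cast_nonneg n
      nlinarith [(abs_lt.mp hx1').1]
    have g2 : Real.Gamma (1 + (N:ℝ) + ((k:ℝ)+1) * ε) ≠ 0 := by
      apply ne_of_gt; apply Real.Gamma_pos_of_pos
      have : (0:ℝ) ≤ (N:ℝ) := Nat.cast_nonneg N
      nlinarith [(abs_lt.mp hx2').1]
    have hsign : ((-1:ℝ)) ^ (N + 1) = (-1) ^ (n + 1) * (-1) ^ m := by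
      rw [← pow_add]
      congr 1
      omega
    have hne1 : ((-1:ℝ)) ^ (N+1) ≠ 0 := by positivity
    have hne2 : ((-1:ℝ)) ^ (n+1) ≠ 0 := by positivity
    have hm2 : ((-1:ℝ)) ^ m * (-1) ^ m = 1 := by
      rw [← pow_add, ← two_mul, pow_mul]
      norm_num
    field_simp
    rw [hsign]
    linear_combination (-(((-1:ℝ)) ^ (n + 1) * Real.sin (π * (k:ℝ) * ε) /
      Real.sin (π * ((k:ℝ) + 1) * ε))) * hm2
  exact hFlim.congr' (by filter_upwards [heq] with ε h using h.symm)
end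

section
/- For real numbers a, b with 0 < a < b, the improper integral ∫₀^∞ J₀(a x) sin(b x) dx converges and equals 1/√(b² - a²). -/
open MeasureTheory Real Filter intervalIntegral Topology Set

noncomputable def besselJ0 (z : ℝ) : ℝ :=
  ∑' m : ℕ, (-1) ^ m * (z / 2) ^ (2 * m) / ((m.factorial : ℝ)) ^ 2




lemma wallis_prod (m : ℕ) : ∏ i ∈ Finset.range m, (2*(i:ℝ)+1)/(2*i+2)
    = ((2*m).factorial : ℝ) / ((4:ℝ)^m * ((m.factorial : ℝ))^2) := by
  induction m with
  | zero => simp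
  | succ k ih =>
    rw [Finset.prod_range_succ, ih]
    have h1 : ((2*(k+1)).factorial : ℝ) = (2*k+2) * ((2*k+1) * ((2*k).factorial : ℝ)) := by
      have : 2*(k+1) = (2*k+1) + 1 := by ring
      rw [this, Nat.factorial_succ]
      push_cast [Nat.factorial_succ]
      ring
    have h2 : (((k+1).factorial : ℝ)) = (k+1) * (k.factorial : ℝ) := by
      push_cast [Nat.factorial_succ]; ring
    rw [h1, h2]
    have hk : ((2*k).factorial : ℝ) ≠ 0 := Nat.cast_ne_zero.2 (Nat.factorial_ne_zero _)
    have hk2 : ((k.factorial : ℝ)) ≠ 0 := Nat.cast_ne_zero.2 (Nat.factorial_ne_zero _)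
    have h4 : (4:ℝ)^k ≠ 0 := by positivity
    have h5 : (2*(k:ℝ)+2) ≠ 0 := by positivity
    have h6 : ((k:ℝ)+1) ≠ 0 := by positivity
    field_simp
    ring

lemma besselJ0_summable (z : ℝ) : Summable (fun m : ℕ => |z|^(2*m) / ((2*m).factorial : ℝ)) := by
  have hinj : Function.Injective (fun m : ℕ => 2*m) := fun m n h => by
    simpa using h
  exact (Real.summable_pow_div_factorial |z|).comp_injective hinj

lemma besselJ0_eq_integral (z : ℝ) :
    besselJ0 z = (1/π) * ∫ θ in (0:ℝ)..π, Real.cos (z * Real.sin θ) := by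
  have hπ : (0:ℝ) < π := Real.pi_pos
  set F : ℕ → ℝ → ℝ := fun m θ => (-1)^m * (z * Real.sin θ)^(2*m) / ((2*m).factorial : ℝ) with hF
  have hcont : ∀ m, Continuous (F m) := by intro m; fun_prop
  have hint : ∀ m, Integrable (F m) (volume.restrict (Set.Ioc (0:ℝ) π)) :=
    fun m => (hcont m).integrableOn_Ioc
  have hbound : ∀ m θ, ‖F m θ‖ ≤ |z|^(2*m) / ((2*m).factorial : ℝ) := by
    intro m θ
    rw [hF]
    simp only [Real.norm_eq_abs, abs_div, abs_mul, abs_pow, abs_neg, abs_one, one_pow, one_mul,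
      Nat.abs_cast, abs_mul]
    gcongr
    calc |z| * |Real.sin θ| ≤ |z| * 1 := by gcongr; exact Real.abs_sin_le_one θ
        _ = |z| := mul_one _
  have hnorm_sum : Summable (fun m => ∫ θ, ‖F m θ‖ ∂(volume.restrict (Set.Ioc (0:ℝ) π))) := by
    apply Summable.of_nonneg_of_le (fun m => integral_nonneg (fun θ => norm_nonneg _))
      (fun m => ?_) ((besselJ0_summable z).mul_left π)
    calc ∫ θ, ‖F m θ‖ ∂(volume.restrict (Set.Ioc (0:ℝ) π))
        ≤ ∫ _, |z|^(2*m) / ((2*m).factorial : ℝ) ∂(volume.restrict (Set.Ioc (0:ℝ) π)) := by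
          apply integral_mono_of_nonneg (Filter.Eventually.of_forall fun θ => norm_nonneg _)
            (integrable_const _) (Filter.Eventually.of_forall (hbound m))
      _ = π * (|z|^(2*m) / ((2*m).factorial : ℝ)) := by
          simp [Real.volume_Ioc, hπ.le]
  have hsum := hasSum_integral_of_summable_integral_norm hint hnorm_sum
  have hpt : ∀ θ, ∑' m, F m θ = Real.cos (z * Real.sin θ) := by
    intro θ
    rw [Real.cos_eq_tsum (z * Real.sin θ)]
  have hval : ∀ m, ∫ θ, F m θ ∂(volume.restrict (Set.Ioc (0:ℝ) π))
      = π * ((-1)^m * (z/2)^(2*m) / ((m.factorial : ℝ))^2) := by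
    intro m
    have : ∫ θ, F m θ ∂(volume.restrict (Set.Ioc (0:ℝ) π))
        = ∫ θ in (0:ℝ)..π, F m θ := (intervalIntegral.integral_of_le hπ.le).symm
    rw [this]
    have : ∀ θ : ℝ, F m θ = ((-1)^m * z^(2*m) / ((2*m).factorial : ℝ)) * (Real.sin θ)^(2*m) := by
      intro θ; rw [hF]; ring
    rw [intervalIntegral.integral_congr (fun θ _ => this θ),
      intervalIntegral.integral_const_mul, integral_sin_pow_even, wallis_prod]
    have hk : ((2*m).factorial : ℝ) ≠ 0 := Nat.cast_ne_zero.2 (Nat.factorial_ne_zero _)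
    have hk2 : ((m.factorial : ℝ)) ≠ 0 := Nat.cast_ne_zero.2 (Nat.factorial_ne_zero _)
    have h4 : (4:ℝ)^m ≠ 0 := by positivity
    have hz : (z/2)^(2*m) = z^(2*m) / 4^m := by
      rw [div_pow]
      congr 1
      rw [pow_mul]
      norm_num
    rw [hz]
    field_simp
  rw [besselJ0]
  have h2 : (∫ θ, ∑' m, F m θ ∂(volume.restrict (Set.Ioc (0:ℝ) π)))
      = ∫ θ in (0:ℝ)..π, Real.cos (z * Real.sin θ) := by
    rw [intervalIntegral.integral_of_le hπ.le]
    exact integral_congr_ae (Filter.Eventually.of_forall fun θ => hpt θ)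
  rw [← h2]
  have := hsum.tsum_eq
  simp_rw [hval] at this
  rw [← this, tsum_mul_left]
  field_simp


lemma inner_int (b c R : ℝ) (hc : 0 ≤ c) (hcb : c < b) :
    ∫ x in (0:ℝ)..R, Real.cos (c*x) * Real.sin (b*x)
    = b/(b^2-c^2) - Real.cos ((b+c)*R)/(2*(b+c)) - Real.cos ((b-c)*R)/(2*(b-c)) := by
  have hb : 0 < b := lt_of_le_of_lt hc hcb
  have hp : b + c ≠ 0 := by positivity
  have hm : b - c ≠ 0 := ne_of_gt (sub_pos.2 hcb)
  set G : ℝ → ℝ := fun x => -Real.cos ((b+c)*x)/(2*(b+c)) - Real.cos ((b-c)*x)/(2*(b-c)) with hG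
  have hderiv : ∀ x, HasDerivAt G (Real.cos (c*x) * Real.sin (b*x)) x := by
    intro x
    have h1 : HasDerivAt (fun x => Real.cos ((b+c)*x)) (-Real.sin ((b+c)*x)*(b+c)) x := by
      simpa using ((hasDerivAt_id' x).const_mul (b+c)).cos
    have h2 : HasDerivAt (fun x => Real.cos ((b-c)*x)) (-Real.sin ((b-c)*x)*(b-c)) x := by
      simpa using ((hasDerivAt_id' x).const_mul (b-c)).cos
    have := ((h1.neg.div_const (2*(b+c))).sub (h2.div_const (2*(b-c))))
    refine this.congr_deriv ?_
    have e1 : Real.sin ((b+c)*x) = Real.sin (b*x) * Real.cos (c*x) + Real.cos (b*x) * Real.sin (c*x) := by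
      rw [add_mul, Real.sin_add]
    have e2 : Real.sin ((b-c)*x) = Real.sin (b*x) * Real.cos (c*x) - Real.cos (b*x) * Real.sin (c*x) := by
      rw [sub_mul, Real.sin_sub]
    rw [e1, e2]
    field_simp
    ring
  have hInt : IntervalIntegrable (fun x => Real.cos (c*x) * Real.sin (b*x)) volume 0 R :=
    (Continuous.mul (by fun_prop) (by fun_prop)).intervalIntegrable _ _
  rw [intervalIntegral.integral_eq_sub_of_hasDerivAt (fun x _ => hderiv x) hInt]
  have : b^2 - c^2 = (b+c)*(b-c) := by ring
  rw [hG]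
  simp only [mul_zero, Real.cos_zero, this]
  field_simp
  ring


lemma fubini_step (a b R : ℝ) (hR : 0 ≤ R) :
    ∫ x in (0:ℝ)..R, (∫ θ in (0:ℝ)..π, Real.cos (a*x*Real.sin θ)) * Real.sin (b*x)
    = ∫ θ in (0:ℝ)..π, ∫ x in (0:ℝ)..R, Real.cos (a*x*Real.sin θ) * Real.sin (b*x) := by
  have hπ : (0:ℝ) ≤ π := Real.pi_pos.le
  have h1 : ∀ x : ℝ, (∫ θ in (0:ℝ)..π, Real.cos (a*x*Real.sin θ)) * Real.sin (b*x)
      = ∫ θ in (0:ℝ)..π, Real.cos (a*x*Real.sin θ) * Real.sin (b*x) := by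
    intro x; rw [← intervalIntegral.integral_mul_const]
  rw [intervalIntegral.integral_congr (fun x _ => h1 x)]
  rw [intervalIntegral.integral_of_le hR, intervalIntegral.integral_of_le hπ]
  simp_rw [intervalIntegral.integral_of_le hπ, intervalIntegral.integral_of_le hR]
  apply MeasureTheory.integral_integral_swap
  have hcont : Continuous (Function.uncurry fun x θ => Real.cos (a*x*Real.sin θ) * Real.sin (b*x)) := by
    fun_prop
  rw [Measure.prod_restrict]
  exact (hcont.locallyIntegrable.integrableOn_isCompact (isCompact_Icc.prod isCompact_Icc)).mono_set
    (Set.prod_mono Set.Ioc_subset_Icc_self Set.Ioc_subset_Icc_self)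


lemma symm_sin (f : ℝ → ℝ) (hf : ContinuousOn f (Set.Icc (-1) 1)) :
    ∫ θ in (0:ℝ)..π, f (Real.sin θ) = 2 * ∫ θ in (0:ℝ)..(π/2), f (Real.sin θ) := by
  have hg : Continuous (fun θ => f (Real.sin θ)) :=
    hf.comp_continuous Real.continuous_sin (fun x => ⟨Real.neg_one_le_sin x, Real.sin_le_one x⟩)
  have h1 : ∫ θ in (π/2:ℝ)..π, f (Real.sin θ) = ∫ θ in (0:ℝ)..(π/2), f (Real.sin θ) := by
    have := intervalIntegral.integral_comp_sub_left (a := (0:ℝ)) (b := π/2)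
      (fun θ => f (Real.sin θ)) π
    rw [show π - π/2 = π/2 by ring, sub_zero] at this
    rw [← this]
    apply intervalIntegral.integral_congr
    intro x _
    simp [Real.sin_pi_sub]
  have h2 : ∫ θ in (0:ℝ)..π, f (Real.sin θ)
      = (∫ θ in (0:ℝ)..(π/2), f (Real.sin θ)) + ∫ θ in (π/2:ℝ)..π, f (Real.sin θ) :=
    (intervalIntegral.integral_add_adjacent_intervals
      (hg.intervalIntegrable _ _) (hg.intervalIntegrable _ _)).symm
  rw [h2, h1]; ring

lemma main_int (a b : ℝ) (ha : 0 < a) (hab : a < b) :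
    ∫ θ in (0:ℝ)..(π/2), b/(b^2 - a^2 * (Real.sin θ)^2)
      = π / (2 * Real.sqrt (b^2 - a^2)) := by
  have hb : 0 < b := ha.trans hab
  have hba : 0 < b^2 - a^2 := by nlinarith
  set K := Real.sqrt (b^2 - a^2) with hK
  have hK0 : 0 < K := Real.sqrt_pos.2 hba
  have hK2 : K^2 = b^2 - a^2 := Real.sq_sqrt hba.le
  set g : ℝ → ℝ := fun θ => b/(b^2 - a^2 * (Real.sin θ)^2) with hg
  have hden : ∀ θ : ℝ, 0 < b^2 - a^2 * (Real.sin θ)^2 := by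
    intro θ
    have h1 : (Real.sin θ)^2 ≤ 1 := Real.sin_sq_le_one θ
    nlinarith
  have hgc : Continuous g := by
    apply Continuous.div continuous_const (by fun_prop)
    intro θ; exact (hden θ).ne'
  set F : ℝ → ℝ := fun θ => Real.arctan (K * Real.tan θ / b) / K with hF2
  have hderiv : ∀ θ ∈ Set.Ico 0 (π/2), HasDerivAt F (g θ) θ := by
    intro θ hθ
    have hcos : Real.cos θ ≠ 0 := by
      have := Real.cos_pos_of_mem_Ioo (Set.mem_Ioo.2 ⟨by linarith [hθ.1, Real.pi_pos], hθ.2⟩)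
      exact this.ne'
    have htan := Real.hasDerivAt_tan hcos
    have harc := Real.hasDerivAt_arctan (K * Real.tan θ / b)
    have hcomp := (harc.comp θ ((htan.const_mul K).div_const b)).div_const K
    refine hcomp.congr_deriv (Eq.symm ?_)
    show b / (b^2 - a^2 * (Real.sin θ)^2) = _
    have hc2 : 0 < Real.cos θ ^ 2 := by positivity
    have key : b^2 - a^2 * Real.sin θ ^ 2 = b^2 * Real.cos θ ^ 2 + K^2 * Real.sin θ ^ 2 := by
      rw [hK2]
      have := Real.sin_sq_add_cos_sq θ
      nlinarith
    rw [key, Real.tan_eq_sin_div_cos]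
    field_simp
  -- value on [0, c] for c < π/2
  have hFTC : ∀ c ∈ Set.Ico (0:ℝ) (π/2), ∫ θ in (0:ℝ)..c, g θ = F c := by
    intro c hc
    have : ∀ θ ∈ Set.uIcc (0:ℝ) c, HasDerivAt F (g θ) θ := by
      intro θ hθ
      rw [Set.uIcc_of_le hc.1] at hθ
      exact hderiv θ ⟨hθ.1, lt_of_le_of_lt hθ.2 hc.2⟩
    rw [intervalIntegral.integral_eq_sub_of_hasDerivAt this (hgc.intervalIntegrable _ _)]
    simp [hF2, Real.tan_zero]
  -- primitive continuous
  have hprim : Continuous (fun x => ∫ θ in (0:ℝ)..x, g θ) :=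
    intervalIntegral.continuous_primitive (fun c d => hgc.intervalIntegrable c d) 0
  have hne : (𝓝[<] (π/2)).NeBot := nhdsLT_neBot (π/2)
  have hlim1 : Tendsto (fun c => ∫ θ in (0:ℝ)..c, g θ) (𝓝[<] (π/2))
      (nhds (∫ θ in (0:ℝ)..(π/2), g θ)) :=
    (hprim.tendsto (π/2)).mono_left nhdsWithin_le_nhds
  have hlim2 : Tendsto F (𝓝[<] (π/2)) (nhds (π / (2*K))) := by
    have h1 : Tendsto (fun c => K * Real.tan c / b) (𝓝[<] (π/2)) atTop := by
      apply Tendsto.atTop_div_const hb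
      exact (Real.tendsto_tan_pi_div_two).const_mul_atTop hK0
    have h2 : Tendsto (fun c => Real.arctan (K * Real.tan c / b)) (𝓝[<] (π/2)) (nhds (π/2)) :=
      (Real.tendsto_arctan_atTop.mono_right nhdsWithin_le_nhds).comp h1
    have := h2.div_const K
    convert this using 2
    ring
  have heq : (fun c => ∫ θ in (0:ℝ)..c, g θ) =ᶠ[𝓝[<] (π/2)] F := by
    filter_upwards [Ioo_mem_nhdsLT_of_mem (Set.mem_Ioc.2 ⟨by positivity, le_refl _⟩)] with c hc
    exact hFTC c ⟨hc.1.le, hc.2⟩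
  have := tendsto_nhds_unique (hlim1.congr' heq) hlim2
  rw [this]


section
open Complex
lemma RL_cos (g : ℝ → ℝ) (hg : Integrable g) (b e : ℝ) (he : e ≠ 0) :
    Tendsto (fun R : ℝ => ∫ u : ℝ, Real.cos ((b + e*u)*R) * g u) atTop (nhds 0) := by
  set f : ℝ → ℂ := fun v => (g v : ℂ) with hf
  have hfi : Integrable f := hg.ofReal
  have H := Real.tendsto_integral_exp_smul_cocompact f
  have hm : Tendsto (fun R : ℝ => -(e*R)/(2*π)) atTop (cocompact ℝ) := by
    rcases lt_or_gt_of_ne he with h | h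
    · have : Tendsto (fun R : ℝ => (-e/(2*π)) * R) atTop atTop :=
        Tendsto.const_mul_atTop (div_pos (by linarith) (by positivity)) tendsto_id
      exact (this.congr (fun R => by ring)).mono_right
        (by rw [cocompact_eq_atBot_atTop]; exact le_sup_right)
    · have : Tendsto (fun R : ℝ => (-e/(2*π)) * R) atTop atBot := by
        apply Tendsto.const_mul_atTop_of_neg _ tendsto_id
        have hπ := Real.pi_pos
        apply div_neg_of_neg_of_pos (by linarith) (by positivity)
      exact (this.congr (fun R => by ring)).mono_right
        (by rw [cocompact_eq_atBot_atTop]; exact le_sup_left)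
  have key : Tendsto (fun R : ℝ => ∫ v : ℝ, Complex.exp ((e*R)*v*Complex.I) * f v)
      atTop (nhds 0) := by
    have := H.comp hm
    refine this.congr (fun R => ?_)
    simp only [Function.comp]
    congr 1
    funext v
    rw [Circle.smul_def, Real.fourierChar_apply]
    congr 2
    push_cast
    have hπ : (π:ℝ) ≠ 0 := Real.pi_ne_zero
    have : (2:ℂ)*(π:ℝ) ≠ 0 := by
      simp [Complex.ofReal_ne_zero, hπ]
    field_simp
  have hnorm : Tendsto (fun R : ℝ => ‖∫ v : ℝ, Complex.exp ((e*R)*v*Complex.I) * f v‖)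
      atTop (nhds 0) := by
    simpa using key.norm
  apply squeeze_zero_norm _ hnorm
  intro R
  set E : ℂ := ∫ v : ℝ, Complex.exp ((e*R)*v*Complex.I) * f v with hE
  have hint : Integrable (fun v : ℝ => Complex.exp (((b+e*v)*R : ℝ)*Complex.I) * f v) := by
    apply hfi.bdd_mul (c := 1) ?_ (Filter.Eventually.of_forall fun v => ?_)
    · apply Continuous.aestronglyMeasurable
      fun_prop
    · rw [Complex.norm_exp_ofReal_mul_I]
  have hre : ∫ u : ℝ, Real.cos ((b + e*u)*R) * g u
      = (Complex.exp ((b*R:ℝ)*Complex.I) * E).re := by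
    rw [hE, ← MeasureTheory.integral_const_mul]
    have : ∀ v : ℝ, Complex.exp ((b*R:ℝ)*Complex.I) * (Complex.exp ((e*R)*v*Complex.I) * f v)
        = Complex.exp (((b+e*v)*R : ℝ)*Complex.I) * f v := by
      intro v
      rw [← mul_assoc, ← Complex.exp_add]
      congr 2
      push_cast
      ring
    rw [integral_congr_ae (Filter.Eventually.of_forall this)]
    rw [← RCLike.re_to_complex, ← integral_re hint]
    congr 1
    funext v
    show Real.cos ((b + e*v)*R) * g v = (Complex.exp (((b+e*v)*R : ℝ)*Complex.I) * (g v : ℂ)).re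
    rw [Complex.mul_re, Complex.exp_ofReal_mul_I_re, Complex.exp_ofReal_mul_I_im]
    simp
  rw [hre]
  calc |(Complex.exp ((b*R:ℝ)*Complex.I) * E).re| ≤ ‖Complex.exp ((b*R:ℝ)*Complex.I) * E‖ :=
        Complex.abs_re_le_norm _
    _ = ‖E‖ := by rw [norm_mul, Complex.norm_exp_ofReal_mul_I, one_mul]


end

lemma W0_integrable (b e : ℝ) (hb : 0 < b) (he : |e| < b) :
    IntegrableOn (fun u : ℝ => 1/(2*(b+e*u)*Real.sqrt (1-u^2))) (Set.Icc 0 1) := by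
  have hbe : 0 < b - |e| := sub_pos.2 he
  set C : ℝ := 1/(2*(b-|e|)) with hC
  have hCpos : 0 < C := by positivity
  have hdom : IntegrableOn (fun u : ℝ => C * (1-u) ^ (-(1/2) : ℝ)) (Set.Icc 0 1) := by
    have h1 : IntervalIntegrable (fun x : ℝ => x ^ (-(1/2) : ℝ)) volume 0 1 :=
      intervalIntegrable_rpow' (by norm_num)
    have h2 := (h1.comp_sub_left 1)
    norm_num at h2
    have h3 : IntervalIntegrable (fun x : ℝ => (1-x) ^ (-(1/2):ℝ)) volume 0 1 := h2.symm
    rw [intervalIntegrable_iff_integrableOn_Icc_of_le (by norm_num)] at h3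
    exact h3.const_mul C
  apply Integrable.mono' hdom
  · apply AEMeasurable.aestronglyMeasurable
    apply Measurable.aemeasurable
    apply Measurable.div measurable_const
    fun_prop
  · filter_upwards [ae_restrict_mem measurableSet_Icc] with u hu
    obtain ⟨hu0, hu1⟩ := hu
    rcases eq_or_lt_of_le hu1 with h1 | h1
    · subst h1
      simp [Real.sqrt_eq_zero', Real.zero_rpow]
    · have hbe' : 0 < b + e*u := by
        have h1 : |e*u| ≤ |e| := by
          rw [abs_mul]
          calc |e| * |u| ≤ |e| * 1 := by
                gcongr
                rw [abs_of_nonneg hu0]; exact hu1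
            _ = |e| := mul_one _
        have := neg_abs_le (e*u)
        linarith [abs_nonneg (e*u), (abs_le.1 h1).1]
      have hsq : 0 < 1 - u^2 := by nlinarith
      have hsqrt : 0 < Real.sqrt (1-u^2) := Real.sqrt_pos.2 hsq
      have hD : 0 < 2*(b+e*u)*Real.sqrt (1-u^2) := by positivity
      have hkey : 2*(b-|e|)*Real.sqrt (1-u) ≤ 2*(b+e*u)*Real.sqrt (1-u^2) := by
        have e1 : Real.sqrt (1-u) ≤ Real.sqrt (1-u^2) := by
          apply Real.sqrt_le_sqrt
          nlinarith
        have e2 : b - |e| ≤ b + e*u := by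
          have h1 : |e*u| ≤ |e| := by
            rw [abs_mul]
            calc |e| * |u| ≤ |e| * 1 := by
                  gcongr
                  rw [abs_of_nonneg hu0]; exact hu1
              _ = |e| := mul_one _
          linarith [(abs_le.1 h1).1]
        have hs : 0 ≤ Real.sqrt (1-u) := Real.sqrt_nonneg _
        nlinarith
      rw [Real.norm_eq_abs, abs_div, abs_one, abs_of_pos hD]
      rw [Real.rpow_neg (by linarith), ← Real.sqrt_eq_rpow]
      rw [hC]
      have hsu : 0 < Real.sqrt (1-u) := Real.sqrt_pos.2 (by linarith)
      have heq : 1 / (2*(b-|e|)) * (Real.sqrt (1-u))⁻¹ = 1 / (2*(b-|e|)*Real.sqrt (1-u)) := by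
        field_simp
      rw [heq]
      exact one_div_le_one_div_of_le (by positivity) hkey

lemma err_eq (b e R : ℝ) (hb : 0 < b) (he : |e| < b) :
    ∫ θ in (0:ℝ)..(π/2), Real.cos ((b + e*Real.sin θ)*R)/(2*(b + e*Real.sin θ))
    = ∫ u in (0:ℝ)..1, Real.cos ((b+e*u)*R) * (1/(2*(b+e*u)*Real.sqrt (1-u^2))) := by
  have hbe : 0 < b - |e| := sub_pos.2 he
  set w : ℝ → ℝ := fun u => Real.cos ((b+e*u)*R) * (1/(2*(b+e*u)*Real.sqrt (1-u^2))) with hw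
  set G : ℝ → ℝ := fun θ => Real.cos ((b + e*Real.sin θ)*R)/(2*(b + e*Real.sin θ)) with hG
  have hpos : ∀ u : ℝ, |u| ≤ 1 → 0 < b + e*u := by
    intro u hu
    have h1 : |e*u| ≤ |e| := by
      rw [abs_mul]
      calc |e| * |u| ≤ |e| * 1 := by gcongr
        _ = |e| := mul_one _
    linarith [(abs_le.1 h1).1]
  have hGc : Continuous G := by
    apply Continuous.div (by fun_prop) (by fun_prop)
    intro θ
    have := hpos (Real.sin θ) (abs_le.2 ⟨Real.neg_one_le_sin θ, Real.sin_le_one θ⟩)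
    positivity
  -- integrability of w on Icc 0 1
  have hwi : IntegrableOn w (Set.Icc 0 1) := by
    apply Integrable.bdd_mul (c := 1) (W0_integrable b e hb he) (Continuous.aestronglyMeasurable (by fun_prop))
    exact Filter.Eventually.of_forall fun u => by rw [Real.norm_eq_abs]; exact Real.abs_cos_le_one _
  -- step on [0, c] for c < π/2
  have hstep : ∀ c ∈ Set.Ico (0:ℝ) (π/2), ∫ θ in (0:ℝ)..c, G θ = ∫ u in (0:ℝ)..(Real.sin c), w u := by
    intro c hc
    have hsc : Real.sin c < 1 := by
      have := Real.sin_lt_sin_of_lt_of_le_pi_div_two (x := c) (y := π/2)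
        (by linarith [hc.1, Real.pi_pos]) le_rfl hc.2
      rwa [Real.sin_pi_div_two] at this
    have himg : Set.uIcc (0:ℝ) c ⊆ Set.Icc 0 c := by
      rw [Set.uIcc_of_le hc.1]
    have hmaps : ∀ θ ∈ Set.uIcc (0:ℝ) c, Real.sin θ ∈ Set.Icc 0 (Real.sin c) := by
      intro θ hθ
      obtain ⟨h0, h1⟩ := himg hθ
      constructor
      · exact Real.sin_nonneg_of_nonneg_of_le_pi h0 (by linarith [hc.2, Real.pi_pos])
      · rcases eq_or_lt_of_le h1 with h | h
        · rw [h]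
        · exact le_of_lt (Real.sin_lt_sin_of_lt_of_le_pi_div_two
            (by linarith [hc.1, Real.pi_pos]) hc.2.le h)
    have hwc : ContinuousOn w (Set.Icc 0 (Real.sin c)) := by
      apply ContinuousOn.mul (Continuous.continuousOn (by fun_prop))
      apply ContinuousOn.div continuousOn_const (Continuous.continuousOn (by fun_prop))
      intro u hu
      have h1 : 0 < b + e*u := hpos u (abs_le.2 ⟨by linarith [hu.1], by linarith [hu.2, hsc.le]⟩)
      have h2 : 0 < 1 - u^2 := by nlinarith [hu.1, lt_of_le_of_lt hu.2 hsc]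
      positivity
    have hsub := intervalIntegral.integral_comp_smul_deriv'
      (f := Real.sin) (f' := Real.cos) (g := w) (a := 0) (b := c)
      (fun x _ => Real.hasDerivAt_sin x) (Real.continuous_cos.continuousOn)
      (hwc.mono (Set.image_subset_iff.2 hmaps))
    rw [Real.sin_zero] at hsub
    rw [← hsub]
    apply intervalIntegral.integral_congr
    intro θ hθ
    rw [Set.uIcc_of_le hc.1] at hθ
    have hθ2 : θ < π/2 := lt_of_le_of_lt hθ.2 hc.2
    have hcos : 0 < Real.cos θ := Real.cos_pos_of_mem_Ioo
      ⟨by linarith [hθ.1, Real.pi_pos], hθ2⟩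
    have h1 : Real.sqrt (1 - Real.sin θ^2) = Real.cos θ := by
      rw [← Real.cos_sq']
      exact Real.sqrt_sq hcos.le
    have hD : 0 < b + e * Real.sin θ :=
      hpos _ (abs_le.2 ⟨Real.neg_one_le_sin θ, Real.sin_le_one θ⟩)
    show Real.cos ((b + e*Real.sin θ)*R)/(2*(b + e*Real.sin θ))
      = Real.cos θ • (Real.cos ((b+e*Real.sin θ)*R) * (1/(2*(b+e*Real.sin θ)*Real.sqrt (1-(Real.sin θ)^2))))
    rw [smul_eq_mul, h1]
    field_simp
  -- now take limits c → (π/2)⁻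
  have hprim1 : Tendsto (fun c => ∫ θ in (0:ℝ)..c, G θ) (𝓝[<] (π/2))
      (𝓝 (∫ θ in (0:ℝ)..(π/2), G θ)) :=
    ((intervalIntegral.continuous_primitive (fun a b => hGc.intervalIntegrable a b) 0).tendsto
      _).mono_left nhdsWithin_le_nhds
  have hΦ : ContinuousOn (fun x => ∫ u in (0:ℝ)..x, w u) (Set.Icc 0 1) := by
    have h := intervalIntegral.continuousOn_primitive_interval (a := 0) (b := (1:ℝ)) (μ := volume)
      (f := w) ?_
    · rwa [Set.uIcc_of_le (by norm_num : (0:ℝ) ≤ 1)] at h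
    · rwa [Set.uIcc_of_le (by norm_num : (0:ℝ) ≤ 1)]
  have hsin_t : Tendsto Real.sin (𝓝[<] (π/2)) (𝓝[Set.Icc (0:ℝ) 1] 1) := by
    apply tendsto_nhdsWithin_of_tendsto_nhds_of_eventually_within
    · have h : Tendsto Real.sin (𝓝 (π/2)) (𝓝 (Real.sin (π/2))) := Real.continuous_sin.tendsto _
      rw [Real.sin_pi_div_two] at h
      exact h.mono_left nhdsWithin_le_nhds
    · filter_upwards [Ioo_mem_nhdsLT_of_mem
        (Set.mem_Ioc.2 ⟨by positivity, le_refl (π/2)⟩)] with c hc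
      exact ⟨Real.sin_nonneg_of_nonneg_of_le_pi hc.1.le (by linarith [hc.2, Real.pi_pos]),
        Real.sin_le_one c⟩
  have hlim2 : Tendsto (fun c => ∫ u in (0:ℝ)..(Real.sin c), w u) (𝓝[<] (π/2))
      (𝓝 (∫ u in (0:ℝ)..1, w u)) :=
    ((hΦ 1 ⟨by norm_num, le_refl _⟩).tendsto).comp hsin_t
  have heq : (fun c => ∫ θ in (0:ℝ)..c, G θ) =ᶠ[𝓝[<] (π/2)]
      (fun c => ∫ u in (0:ℝ)..(Real.sin c), w u) := by
    filter_upwards [Ioo_mem_nhdsLT_of_mem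
      (Set.mem_Ioc.2 ⟨by positivity, le_refl (π/2)⟩)] with c hc
    exact hstep c ⟨hc.1.le, hc.2⟩
  exact tendsto_nhds_unique (hprim1.congr' heq) hlim2


lemma err_tendsto (b e : ℝ) (hb : 0 < b) (he0 : e ≠ 0) (he : |e| < b) :
    Tendsto (fun R : ℝ => ∫ θ in (0:ℝ)..(π/2),
      Real.cos ((b + e*Real.sin θ)*R)/(2*(b + e*Real.sin θ))) atTop (nhds 0) := by
  set W : ℝ → ℝ := Set.indicator (Set.Ioc 0 1) (fun u => 1/(2*(b+e*u)*Real.sqrt (1-u^2))) with hW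
  have hWint : Integrable W := (integrable_indicator_iff measurableSet_Ioc).2
    ((W0_integrable b e hb he).mono_set Set.Ioc_subset_Icc_self)
  have h := RL_cos W hWint b e he0
  refine h.congr (fun R => ?_)
  rw [err_eq b e R hb he, intervalIntegral.integral_of_le (by norm_num : (0:ℝ) ≤ 1),
    ← MeasureTheory.integral_indicator measurableSet_Ioc]
  congr 1
  funext u
  by_cases hu : u ∈ Set.Ioc (0:ℝ) 1
  · rw [hW, Set.indicator_of_mem hu, Set.indicator_of_mem hu]
  · rw [hW, Set.indicator_of_notMem hu, Set.indicator_of_notMem hu, mul_zero]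



theorem bessel_sin_integral (a b : ℝ) (ha : 0 < a) (hab : a < b) :
    Filter.Tendsto (fun R : ℝ => ∫ x in (0 : ℝ)..R, besselJ0 (a * x) * Real.sin (b * x))
      Filter.atTop (nhds (1 / Real.sqrt (b ^ 2 - a ^ 2))) := by
  have hb : 0 < b := ha.trans hab
  have hba : 0 < b^2 - a^2 := by nlinarith
  have hπ : (0:ℝ) < π := Real.pi_pos
  have haa : |a| < b := by rwa [abs_of_pos ha]
  have hna : |(-a)| < b := by rwa [abs_neg, abs_of_pos ha]
  have hsin_pos : ∀ θ : ℝ, |Real.sin θ| ≤ 1 :=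
    fun θ => abs_le.2 ⟨Real.neg_one_le_sin θ, Real.sin_le_one θ⟩
  have hdenp : ∀ u : ℝ, |u| ≤ 1 → 0 < b + a * u := by
    intro u hu; nlinarith [(abs_le.1 hu).1]
  have hdenm : ∀ u : ℝ, |u| ≤ 1 → 0 < b + (-a) * u := by
    intro u hu; nlinarith [(abs_le.1 hu).2]
  have hden2 : ∀ u : ℝ, |u| ≤ 1 → 0 < b^2 - a^2 * u^2 := by
    intro u hu
    have h2 : u^2 ≤ 1 := by nlinarith [abs_le.1 hu]
    nlinarith
  set A : ℝ := ∫ θ in (0:ℝ)..(π/2), b/(b^2 - a^2 * (Real.sin θ)^2) with hA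
  set Ep : ℝ → ℝ := fun R => ∫ θ in (0:ℝ)..(π/2),
    Real.cos ((b + a*Real.sin θ)*R)/(2*(b + a*Real.sin θ)) with hEp
  set Em : ℝ → ℝ := fun R => ∫ θ in (0:ℝ)..(π/2),
    Real.cos ((b + (-a)*Real.sin θ)*R)/(2*(b + (-a)*Real.sin θ)) with hEm
  -- key identity for R ≥ 0
  have key : ∀ R : ℝ, 0 ≤ R → (∫ x in (0:ℝ)..R, besselJ0 (a*x) * Real.sin (b*x))
      = (1/π)*(2*A - 2*Ep R - 2*Em R) := by
    intro R hR
    have e1 : ∀ x ∈ Set.uIcc (0:ℝ) R, besselJ0 (a*x) * Real.sin (b*x)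
        = (1/π) * ((∫ θ in (0:ℝ)..π, Real.cos (a*x*Real.sin θ)) * Real.sin (b*x)) := by
      intro x _
      rw [besselJ0_eq_integral (a*x)]
      ring
    rw [intervalIntegral.integral_congr e1, intervalIntegral.integral_const_mul,
      fubini_step a b R hR]
    have e2 : ∀ θ ∈ Set.uIcc (0:ℝ) π, (∫ x in (0:ℝ)..R, Real.cos (a*x*Real.sin θ) * Real.sin (b*x))
        = b/(b^2 - a^2*(Real.sin θ)^2) - Real.cos ((b + a*Real.sin θ)*R)/(2*(b + a*Real.sin θ))
          - Real.cos ((b + (-a)*Real.sin θ)*R)/(2*(b + (-a)*Real.sin θ)) := by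
      intro θ hθ
      rw [Set.uIcc_of_le hπ.le] at hθ
      have hs0 : 0 ≤ Real.sin θ := Real.sin_nonneg_of_nonneg_of_le_pi hθ.1 hθ.2
      have hsb : a * Real.sin θ < b := by nlinarith [(abs_le.1 (hsin_pos θ)).2]
      have e3 : ∀ x ∈ Set.uIcc (0:ℝ) R, Real.cos (a*x*Real.sin θ) * Real.sin (b*x)
          = Real.cos ((a*Real.sin θ)*x) * Real.sin (b*x) := by
        intro x _
        congr 2
        ring
      rw [intervalIntegral.integral_congr e3, inner_int b (a*Real.sin θ) R (by positivity) hsb]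
      have r1 : b^2 - (a*Real.sin θ)^2 = b^2 - a^2*(Real.sin θ)^2 := by ring
      have r2 : (b - a*Real.sin θ)*R = (b + (-a)*Real.sin θ)*R := by ring
      have r3 : (2:ℝ)*(b - a*Real.sin θ) = 2*(b + (-a)*Real.sin θ) := by ring
      rw [r1, r2, r3]
    rw [intervalIntegral.integral_congr e2]
    have c1 : Continuous (fun θ : ℝ => b/(b^2 - a^2*(Real.sin θ)^2)) := by
      apply Continuous.div continuous_const (by fun_prop)
      intro θ; exact (hden2 _ (hsin_pos θ)).ne'
    have c2 : Continuous (fun θ : ℝ => Real.cos ((b + a*Real.sin θ)*R)/(2*(b + a*Real.sin θ))) := by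
      apply Continuous.div (by fun_prop) (by fun_prop)
      intro θ
      have := hdenp _ (hsin_pos θ); positivity
    have c3 : Continuous (fun θ : ℝ =>
        Real.cos ((b + (-a)*Real.sin θ)*R)/(2*(b + (-a)*Real.sin θ))) := by
      apply Continuous.div (by fun_prop) (by fun_prop)
      intro θ
      have := hdenm _ (hsin_pos θ); positivity
    rw [intervalIntegral.integral_sub (f := fun θ : ℝ => b/(b^2 - a^2*(Real.sin θ)^2) - Real.cos ((b + a*Real.sin θ)*R)/(2*(b + a*Real.sin θ)))
        ((c1.sub c2).intervalIntegrable _ _) (c3.intervalIntegrable _ _),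
      intervalIntegral.integral_sub (c1.intervalIntegrable _ _) (c2.intervalIntegrable _ _)]
    have s1 : ∫ θ in (0:ℝ)..π, b/(b^2 - a^2*(Real.sin θ)^2)
        = 2 * ∫ θ in (0:ℝ)..(π/2), b/(b^2 - a^2*(Real.sin θ)^2) :=
      symm_sin (fun u => b/(b^2 - a^2*u^2)) (by
        apply ContinuousOn.div continuousOn_const (by fun_prop)
        intro u hu
        exact (hden2 u (abs_le.2 ⟨hu.1, hu.2⟩)).ne')
    have s2 : ∫ θ in (0:ℝ)..π, Real.cos ((b + a*Real.sin θ)*R)/(2*(b + a*Real.sin θ))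
        = 2 * ∫ θ in (0:ℝ)..(π/2), Real.cos ((b + a*Real.sin θ)*R)/(2*(b + a*Real.sin θ)) :=
      symm_sin (fun u => Real.cos ((b + a*u)*R)/(2*(b + a*u))) (by
        apply ContinuousOn.div (by fun_prop) (by fun_prop)
        intro u hu
        have := hdenp u (abs_le.2 ⟨hu.1, hu.2⟩); positivity)
    have s3 : ∫ θ in (0:ℝ)..π, Real.cos ((b + (-a)*Real.sin θ)*R)/(2*(b + (-a)*Real.sin θ))
        = 2 * ∫ θ in (0:ℝ)..(π/2),
            Real.cos ((b + (-a)*Real.sin θ)*R)/(2*(b + (-a)*Real.sin θ)) :=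
      symm_sin (fun u => Real.cos ((b + (-a)*u)*R)/(2*(b + (-a)*u))) (by
        apply ContinuousOn.div (by fun_prop) (by fun_prop)
        intro u hu
        have := hdenm u (abs_le.2 ⟨hu.1, hu.2⟩); positivity)
    rw [s1, s2, s3]
  -- the limit
  have hEp0 : Tendsto Ep atTop (nhds 0) := err_tendsto b a hb (ne_of_gt ha) haa
  have hEm0 : Tendsto Em atTop (nhds 0) := err_tendsto b (-a) hb (by simpa using ne_of_gt ha) hna
  have hT : Tendsto (fun R => (1/π)*(2*A - 2*Ep R - 2*Em R)) atTop
      (nhds ((1/π)*(2*A - 2*0 - 2*0))) := by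
    apply Tendsto.const_mul
    exact (tendsto_const_nhds.sub (hEp0.const_mul 2)).sub (hEm0.const_mul 2)
  have hval : (1/π)*(2*A - 2*0 - 2*0) = 1 / Real.sqrt (b^2 - a^2) := by
    rw [hA, main_int a b ha hab]
    have h1 : Real.sqrt (b^2 - a^2) ≠ 0 := (Real.sqrt_pos.2 hba).ne'
    field_simp
    ring
  rw [hval] at hT
  apply hT.congr'
  filter_upwards [Ici_mem_atTop (0:ℝ)] with R hR
  exact (key R hR).symm
end
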